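/- arXiv:2110.01595 — 7 statements merged into one kernel-verified Lean document; each statement's English description precedes it below -/
import Mathlib

section
/- Let s ≥ 0 and r_c, d_c ≥ 1 be integers with d = r_c·d_c. Suppose the scheme (A, E, D) with message dimension d_c resists s Byzantine nodes and every encoder E_j is regular. Then for every i ∈ {1,…,P}, the i-th column of A has at least 2s + r_c nonzero entries; consequently, the total number of nonzero entries of A satisfies ‖A‖₀ ≥ P·(2s + r_c). That is, the computational redundancy ratio must be at least 2s + r_c. -/
open Matrix

/-- The local data of node `j`: column `i` of `Y_j` equals `A j i • g_i`. -/
def nodeData {P d : ℕ} (A : Matrix (Fin P) (Fin P) ℝ)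
    (G : Matrix (Fin d) (Fin P) ℝ) (j : Fin P) : Matrix (Fin d) (Fin P) ℝ :=
  fun i k => A j k * G i k

/-- The encoded matrix `Z^{A,E,G}`, whose `j`-th column is `E_j (Y_j)`. -/
def encoded {P d m : ℕ} (A : Matrix (Fin P) (Fin P) ℝ)
    (E : Fin P → Matrix (Fin d) (Fin P) ℝ → (Fin m → ℝ))
    (G : Matrix (Fin d) (Fin P) ℝ) : Matrix (Fin m) (Fin P) ℝ :=
  fun v j => E j (nodeData A G j) v

/-- An `s`-attack: a matrix with at most `s` nonzero columns. -/
def IsAttack {m P : ℕ} (s : ℕ) (N : Matrix (Fin m) (Fin P) ℝ) : Prop :=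
  {j : Fin P | (fun v => N v j) ≠ 0}.ncard ≤ s

/-- The scheme `(A, E, D)` resists `s` Byzantine nodes. -/
def Resists {P d m : ℕ} (s : ℕ) (A : Matrix (Fin P) (Fin P) ℝ)
    (E : Fin P → Matrix (Fin d) (Fin P) ℝ → (Fin m → ℝ))
    (D : Matrix (Fin m) (Fin P) ℝ → (Fin d → ℝ)) : Prop :=
  ∀ (G : Matrix (Fin d) (Fin P) ℝ) (N : Matrix (Fin m) (Fin P) ℝ),
    IsAttack s N → D (encoded A E G + N) = fun i => ∑ k, G i k

/-- A regular encoder: each output coordinate depends on `Y` only through the vector of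
column sums of `U ⊙ Y` for some matrix `U`. -/
def Regular {P d dc : ℕ} (Ej : Matrix (Fin d) (Fin P) ℝ → (Fin dc → ℝ)) : Prop :=
  ∀ v : Fin dc, ∃ (U : Matrix (Fin d) (Fin P) ℝ) (Ehat : (Fin P → ℝ) → ℝ),
    ∀ Y : Matrix (Fin d) (Fin P) ℝ, Ej Y v = Ehat (fun k => ∑ i, U i k * Y i k)

lemma col_bound (P s rc dc : ℕ) (hrc : 1 ≤ rc) (hdc : 1 ≤ dc)
    (A : Matrix (Fin P) (Fin P) ℝ)
    (E : Fin P → Matrix (Fin (rc * dc)) (Fin P) ℝ → (Fin dc → ℝ))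
    (D : Matrix (Fin dc) (Fin P) ℝ → (Fin (rc * dc) → ℝ))
    (hreg : ∀ j : Fin P, Regular (E j))
    (hres : Resists s A E D) (i : Fin P) :
    2 * s + rc ≤ (Finset.univ.filter fun j => A j i ≠ 0).card := by
  by_contra hlt
  push_neg at hlt
  set S : Finset (Fin P) := Finset.univ.filter fun j => A j i ≠ 0 with hS
  -- choose T ⊆ S of size min S.card (rc - 1)
  obtain ⟨T, hTsub, hTcard⟩ :=
    Finset.exists_subset_card_eq (min_le_left S.card (rc - 1))
  have hT1 : T.card ≤ rc - 1 := hTcard ▸ min_le_right _ _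
  have hST : (S \ T).card ≤ 2 * s := by
    rw [Finset.card_sdiff_of_subset hTsub]
    omega
  -- choose B₁ ⊆ S \ T of size min card s
  obtain ⟨B₁, hB₁sub, hB₁card⟩ :=
    Finset.exists_subset_card_eq (min_le_left (S \ T).card s)
  set B₂ : Finset (Fin P) := (S \ T) \ B₁ with hB₂
  have hB₁s : B₁.card ≤ s := hB₁card ▸ min_le_right _ _
  have hB₂s : B₂.card ≤ s := by
    rw [hB₂, Finset.card_sdiff_of_subset hB₁sub]
    omega
  -- extract the matrices from regularity
  choose U Eh hU using hreg
  -- the linear map of all relevant functionals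
  let f : (Fin (rc * dc) → ℝ) →ₗ[ℝ] ((T × Fin dc) → ℝ) :=
    { toFun := fun g jv => ∑ r, U jv.1 jv.2 r i * g r
      map_add' := by
        intro a b
        funext jv
        simp [mul_add, Finset.sum_add_distrib]
      map_smul' := by
        intro c a
        funext jv
        simp [Finset.mul_sum, mul_left_comm] }
  have hfnotinj : ¬ Function.Injective f := by
    intro hinj
    have h1 := LinearMap.finrank_le_finrank_of_injective hinj
    rw [Module.finrank_pi ℝ, Module.finrank_pi ℝ] at h1
    simp only [Fintype.card_prod, Fintype.card_coe, Fintype.card_fin] at h1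
    have h2 : T.card * dc ≤ (rc - 1) * dc := Nat.mul_le_mul_right dc hT1
    have h3 : (rc - 1) * dc < rc * dc := by
      have : rc - 1 < rc := by omega
      exact Nat.mul_lt_mul_of_lt_of_le this (le_refl dc) (by omega)
    omega
  rw [Function.not_injective_iff] at hfnotinj
  obtain ⟨a, b, hab, hne⟩ := hfnotinj
  set g : Fin (rc * dc) → ℝ := a - b with hgdef
  have hg0 : g ≠ 0 := sub_ne_zero.mpr hne
  have hfg : f g = 0 := by rw [hgdef, map_sub, hab, sub_self]
  -- the gradient matrix supported on column i
  set G : Matrix (Fin (rc * dc)) (Fin P) ℝ := fun r k => if k = i then g r else 0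
    with hG
  -- key: encodings agree on columns outside S \ T
  have hkey : ∀ j : Fin P, j ∉ S \ T →
      E j (nodeData A G j) = E j (nodeData A (0 : Matrix _ _ ℝ) j) := by
    intro j hj
    have hnode0 : nodeData A (0 : Matrix (Fin (rc * dc)) (Fin P) ℝ) j = 0 := by
      funext r k; simp [nodeData]
    by_cases hjS : j ∈ S
    · have hjT : j ∈ T := by
        by_contra hjT
        exact hj (Finset.mem_sdiff.mpr ⟨hjS, hjT⟩)
      funext v
      rw [hU j v, hU j v]
      congr 1
      funext k
      rw [hnode0]
      simp only [Matrix.zero_apply, mul_zero, Finset.sum_const_zero]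
      by_cases hk : k = i
      · subst hk
        have : ∑ r, U j v r k * nodeData A G j r k
            = A j k * ∑ r, U j v r k * g r := by
          rw [Finset.mul_sum]
          congr 1
          funext r
          simp [nodeData, hG]
          ring
        rw [this]
        have : (∑ r, U j v r k * g r) = 0 := congrFun hfg (⟨j, hjT⟩, v)
        rw [this, mul_zero]
      · apply Finset.sum_eq_zero
        intro r _
        simp [nodeData, hG, hk]
    · have hA : A j i = 0 := by
        by_contra hA
        exact hjS (Finset.mem_filter.mpr ⟨Finset.mem_univ j, hA⟩)
      have : nodeData A G j = 0 := by
        funext r k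
        by_cases hk : k = i
        · subst hk; simp [nodeData, hG, hA]
        · simp [nodeData, hG, hk]
      rw [this, hnode0]
  -- the middle matrix
  set Z : Matrix (Fin dc) (Fin P) ℝ := encoded A E G with hZ
  set Z' : Matrix (Fin dc) (Fin P) ℝ := encoded A E 0 with hZ'
  have hcols : ∀ j ∉ S \ T, ∀ v, Z v j = Z' v j := by
    intro j hj v
    simp only [hZ, hZ', encoded]
    rw [hkey j hj]
  set M : Matrix (Fin dc) (Fin P) ℝ := fun v k => if k ∈ B₁ then Z v k else Z' v k
    with hM
  -- attack against Z
  have hatk1 : IsAttack s (M - Z) := by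
    refine le_trans (le_trans (Set.ncard_le_ncard ?_ (B₂ : Set (Fin P)).toFinite)
      (le_of_eq (Set.ncard_coe_finset B₂))) hB₂s
    intro k hk
    simp only [Set.mem_setOf_eq] at hk
    by_contra hkB₂
    apply hk
    funext v
    simp only [Matrix.sub_apply, Pi.zero_apply]
    by_cases hkB₁ : k ∈ B₁
    · simp [hM, hkB₁]
    · have hkST : k ∉ S \ T := by
        intro hmem
        exact hkB₂ (Finset.mem_sdiff.mpr ⟨hmem, hkB₁⟩)
      simp only [hM, if_neg hkB₁]
      rw [sub_eq_zero]
      exact (hcols k hkST v).symm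
  have hatk2 : IsAttack s (M - Z') := by
    refine le_trans (le_trans (Set.ncard_le_ncard ?_ (B₁ : Set (Fin P)).toFinite)
      (le_of_eq (Set.ncard_coe_finset B₁))) hB₁s
    intro k hk
    simp only [Set.mem_setOf_eq] at hk
    by_contra hkB₁
    apply hk
    funext v
    simp only [Matrix.sub_apply, Pi.sub_apply, Pi.zero_apply, hM]
    show (if k ∈ B₁ then Z v k else Z' v k) - Z' v k = 0
    rw [if_neg (by simpa using hkB₁), sub_self]
  have hZM : Z + (M - Z) = M := by abel
  have hZ'M : Z' + (M - Z') = M := by abel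
  have h1 := hres G (M - Z) hatk1
  have h2 := hres 0 (M - Z') hatk2
  rw [hZM] at h1
  rw [hZ'M] at h2
  rw [h1] at h2
  apply hg0
  funext r
  have := congrFun h2 r
  simpa [hG] using this

/-- Theorem (lower bound on redundancy): if a scheme with message dimension `d_c`
(where `d = r_c · d_c`) has regular encoders and resists `s` Byzantine nodes, then every
column of the assignment matrix `A` has at least `2s + r_c` nonzero entries, and hence
`‖A‖₀ ≥ P (2s + r_c)`. -/
theorem redundancy_ratio_bound (P s rc dc : ℕ) (hrc : 1 ≤ rc) (hdc : 1 ≤ dc)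
    (A : Matrix (Fin P) (Fin P) ℝ)
    (E : Fin P → Matrix (Fin (rc * dc)) (Fin P) ℝ → (Fin dc → ℝ))
    (D : Matrix (Fin dc) (Fin P) ℝ → (Fin (rc * dc) → ℝ))
    (hreg : ∀ j : Fin P, Regular (E j))
    (hres : Resists s A E D) :
    (∀ i : Fin P, 2 * s + rc ≤ {j : Fin P | A j i ≠ 0}.ncard) ∧
      P * (2 * s + rc) ≤ {p : Fin P × Fin P | A p.1 p.2 ≠ 0}.ncard := by
  have hcol := col_bound P s rc dc hrc hdc A E D hreg hres
  have hncard : ∀ i : Fin P,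
      {j : Fin P | A j i ≠ 0}.ncard = (Finset.univ.filter fun j => A j i ≠ 0).card := by
    intro i
    rw [Set.ncard_eq_toFinset_card']
    congr 1
    ext j
    simp
  constructor
  · intro i
    rw [hncard i]
    exact hcol i
  · have hpair : {p : Fin P × Fin P | A p.1 p.2 ≠ 0}.ncard
        = (Finset.univ.filter fun p : Fin P × Fin P => A p.1 p.2 ≠ 0).card := by
      rw [Set.ncard_eq_toFinset_card']
      congr 1
      ext p
      simp
    rw [hpair]
    rw [Finset.card_eq_sum_card_fiberwise
      (f := fun p : Fin P × Fin P => p.2) (t := Finset.univ)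
      (fun p _ => Finset.mem_univ p.2)]
    have hfib : ∀ i : Fin P,
        ((Finset.univ.filter fun p : Fin P × Fin P => A p.1 p.2 ≠ 0).filter
          fun p => p.2 = i).card
        = (Finset.univ.filter fun j => A j i ≠ 0).card := by
      intro i
      have : ((Finset.univ.filter fun p : Fin P × Fin P => A p.1 p.2 ≠ 0).filter
          fun p => p.2 = i)
          = (Finset.univ.filter fun j => A j i ≠ 0).image (fun j => (j, i)) := by
        ext p
        simp only [Finset.mem_filter, Finset.mem_univ, true_and, Finset.mem_image]
        constructor
        · rintro ⟨h1, h2⟩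
          subst h2
          exact ⟨p.1, h1, rfl⟩
        · rintro ⟨j, hj, rfl⟩
          exact ⟨hj, rfl⟩
      rw [this, Finset.card_image_of_injective _ (fun a b h => (Prod.mk.injEq _ _ _ _).mp h |>.1)]
    calc P * (2 * s + rc) = ∑ _i : Fin P, (2 * s + rc) := by
          simp [Finset.sum_const, Finset.card_univ, mul_comm]
      _ ≤ ∑ i : Fin P, (Finset.univ.filter fun j => A j i ≠ 0).card :=
          Finset.sum_le_sum (fun i _ => hcol i)
      _ = _ := by
          apply Finset.sum_congr rfl
          intro i _
          rw [hfib i]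
end

section
/- Let s ≥ 0 and r_c, d_c ≥ 1 be integers with d = r_c·d_c. If a scheme (A, E, D) with message dimension d_c has all encoders regular and resists s Byzantine nodes, then 2s + r_c ≤ P; equivalently, such a scheme can resist at most (P − r_c)/2 adversarial nodes, i.e., s ≤ (P − r_c)/2. -/
open Matrix

/-- Corollary (bound on the number of adversaries): a scheme with message dimension `d_c`
(where `d = r_c · d_c`), regular encoders, resisting `s` Byzantine nodes, satisfies
`2s + r_c ≤ P`, i.e. it can resist at most `(P - r_c)/2` adversarial nodes. -/
theorem adversarial_bound (P s rc dc : ℕ) (hP : 0 < P) (hrc : 1 ≤ rc) (hdc : 1 ≤ dc)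
    (A : Matrix (Fin P) (Fin P) ℝ)
    (E : Fin P → Matrix (Fin (rc * dc)) (Fin P) ℝ → (Fin dc → ℝ))
    (D : Matrix (Fin dc) (Fin P) ℝ → (Fin (rc * dc) → ℝ))
    (hreg : ∀ j : Fin P, Regular (E j))
    (hres : Resists s A E D) :
    2 * s + rc ≤ P := by
  by_contra hcon
  push_neg at hcon
  classical
  choose U Ehat hU using hreg
  set k0 : Fin P := ⟨0, hP⟩ with hk0
  let L : (Fin (rc * dc) → ℝ) →ₗ[ℝ] ({j : Fin P // 2 * s ≤ j.val} × Fin dc → ℝ) :=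
    { toFun := fun x p => ∑ i, U p.1.1 p.2 i k0 * A p.1.1 k0 * x i
      map_add' := by
        intro a b; funext p
        simp [mul_add, Finset.sum_add_distrib]
      map_smul' := by
        intro r a; funext p
        simp [Finset.mul_sum]; exact Finset.sum_congr rfl (fun i _ => by ring) }
  have hcard1 : Fintype.card {j : Fin P // 2 * s ≤ j.val} ≤ P - 2 * s := by
    have hinj : Function.Injective (fun j : {j : Fin P // 2 * s ≤ j.val} =>
        (⟨j.1.val - 2 * s, by have := j.1.isLt; have := j.2; omega⟩ : Fin (P - 2 * s))) := by
      intro a b h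
      have h1 := a.2; have h2 := b.2
      have := Fin.val_eq_of_eq h
      simp only at this
      exact Subtype.ext (Fin.ext (by omega))
    simpa using Fintype.card_le_of_injective _ hinj
  have hcard : Fintype.card ({j : Fin P // 2 * s ≤ j.val} × Fin dc) < rc * dc := by
    rw [Fintype.card_prod, Fintype.card_fin]
    calc Fintype.card {j : Fin P // 2 * s ≤ j.val} * dc
        ≤ (P - 2 * s) * dc := Nat.mul_le_mul_right dc hcard1
      _ ≤ (rc - 1) * dc := Nat.mul_le_mul_right dc (by omega)
      _ < rc * dc := by
          have : rc - 1 < rc := by omega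
          exact Nat.mul_lt_mul_of_lt_of_le this (le_refl dc) (by omega)
  have hnotinj : ¬ Function.Injective L := by
    intro hinj
    have h1 := LinearMap.finrank_le_finrank_of_injective hinj
    rw [Module.finrank_fintype_fun_eq_card, Module.finrank_fintype_fun_eq_card,
      Fintype.card_fin] at h1
    omega
  obtain ⟨a, b, hab, hne⟩ := Function.not_injective_iff.mp hnotinj
  set x : Fin (rc * dc) → ℝ := a - b with hxdef
  have hx0 : x ≠ 0 := sub_ne_zero.mpr hne
  have hLx : L x = 0 := by rw [map_sub, hab, sub_self]
  set G : Matrix (Fin (rc * dc)) (Fin P) ℝ := fun i k => if k = k0 then x i else 0 with hG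
  have hkey : ∀ j : Fin P, 2 * s ≤ j.val → ∀ v,
      E j (nodeData A G j) v = E j (nodeData A 0 j) v := by
    intro j hj v
    rw [hU j v, hU j v]
    congr 1
    funext k
    have hz : ∑ i, U j v i k * nodeData A (0 : Matrix (Fin (rc*dc)) (Fin P) ℝ) j i k = 0 := by
      simp [nodeData]
    rw [hz]
    by_cases hk : k = k0
    · subst hk
      have hc : ∑ i, U j v i k0 * A j k0 * x i = 0 := congrFun hLx ⟨⟨j, hj⟩, v⟩
      rw [← hc]
      refine Finset.sum_congr rfl (fun i _ => ?_)
      simp [nodeData, hG]; ring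
    · refine Finset.sum_eq_zero (fun i _ => ?_)
      simp [nodeData, hG, hk]
  set N1 : Matrix (Fin dc) (Fin P) ℝ :=
    fun v j => if j.val < s then encoded A E 0 v j - encoded A E G v j else 0 with hN1def
  set N2 : Matrix (Fin dc) (Fin P) ℝ :=
    fun v j => if s ≤ j.val ∧ j.val < 2 * s then encoded A E G v j - encoded A E 0 v j else 0
    with hN2def
  have attackOf : ∀ (N : Matrix (Fin dc) (Fin P) ℝ) (f : Fin P → ℕ),
      (∀ j, (fun v => N v j) ≠ 0 → f j < s) →
      (∀ j j', (fun v => N v j) ≠ 0 → (fun v => N v j') ≠ 0 → f j = f j' → j = j') →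
      IsAttack s N := by
    intro N f hmem hinj
    unfold IsAttack
    have hfin : ({j : Fin P | (fun v => N v j) ≠ 0}).Finite := Set.toFinite _
    rw [Set.ncard_eq_toFinset_card _ hfin]
    calc hfin.toFinset.card
        ≤ (Finset.range s).card := by
          apply Finset.card_le_card_of_injOn f
          · intro j hj
            rw [Finset.mem_coe, Set.Finite.mem_toFinset] at hj
            exact Finset.mem_range.mpr (hmem j hj)
          · intro j hj j' hj' h
            simp only [Finset.mem_coe, Set.Finite.mem_toFinset, Set.mem_setOf_eq] at hj hj'
            exact hinj j j' hj hj' h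
      _ = s := Finset.card_range s
  have hN1 : IsAttack s N1 := by
    apply attackOf N1 (fun j => j.val)
    · intro j hj
      by_contra hlt
      exact hj (funext fun v => by simp [hN1def, hlt])
    · intro j j' _ _ h; exact Fin.ext h
  have hN2 : IsAttack s N2 := by
    apply attackOf N2 (fun j => j.val - s)
    · intro j hj
      by_contra hlt
      have : ¬ (s ≤ j.val ∧ j.val < 2 * s) := by omega
      exact hj (funext fun v => by simp [hN2def, this])
    · intro j j' hj hj' h
      have c1 : s ≤ j.val := by
        by_contra hc
        exact hj (funext fun v => by simp [hN2def]; omega)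
      have c2 : s ≤ j'.val := by
        by_contra hc
        exact hj' (funext fun v => by simp [hN2def]; omega)
      exact Fin.ext (by omega)
  have heq : encoded A E G + N1 = encoded A E 0 + N2 := by
    funext v j
    show encoded A E G v j + N1 v j = encoded A E 0 v j + N2 v j
    simp only [Matrix.add_apply, hN1def, hN2def]
    rcases lt_or_ge j.val s with h1 | h1
    · rw [if_pos h1, if_neg (by omega)]; ring
    · rcases lt_or_ge j.val (2 * s) with h2 | h2
      · rw [if_neg (by omega), if_pos ⟨h1, h2⟩]; ring
      · rw [if_neg (by omega), if_neg (by omega)]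
        have := hkey j h2 v
        simp [encoded, this]
  have h1 := hres G N1 hN1
  have h2 := hres 0 N2 hN2
  rw [heq, h2] at h1
  apply hx0
  funext i
  have := congrFun h1 i
  simp only [Matrix.zero_apply, Finset.sum_const_zero] at this
  have hs : ∑ k, G i k = x i := by
    simp [hG, Finset.sum_ite_eq']
  rw [hs] at this
  exact this.symm
end

section
/- Let s ≥ 0 and r_c ≥ 1 be integers and r = r_c + 2s. Let w_1,…,w_r be distinct real numbers, let Q be a real polynomial of degree < r_c, let e ∈ ℝ^r be s-sparse, and define y_k = Q(w_k) + e_k for k = 1,…,r. Then for every monic real polynomial P̃ of degree s and every real polynomial R̃ of degree at most r_c + s − 1 satisfying P̃(w_k)·y_k = R̃(w_k) for all k = 1,…,r, one has R̃ = P̃·Q. In particular, P̃ divides R̃ and the ratio R̃/P̃ is the well-defined polynomial Q, independent of which solution (P̃, R̃) of the linear system is found. -/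
open Polynomial

/-- Uniqueness for the Berlekamp–Welch key equations: if `y_k = Q(w_k) + e_k` with `Q` of
degree `< r_c`, distinct points `w_1, …, w_r` (`r = r_c + 2s`), and `s`-sparse `e`, then
every monic polynomial `P̃` of degree `s` and polynomial `R̃` of degree at most
`r_c + s - 1` satisfying the key equations `P̃(w_k)·y_k = R̃(w_k)` for all `k` obey
`R̃ = P̃ · Q`; in particular `P̃ ∣ R̃` and `R̃ / P̃ = Q` is well defined. -/
theorem berlekamp_welch_unique (s rc : ℕ) (hrc : 1 ≤ rc)
    (w : Fin (rc + 2 * s) → ℝ) (hw : Function.Injective w)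
    (Q : Polynomial ℝ) (hQ : Q.degree < (rc : WithBot ℕ))
    (e : Fin (rc + 2 * s) → ℝ) (he : {k | e k ≠ 0}.ncard ≤ s)
    (y : Fin (rc + 2 * s) → ℝ) (hy : ∀ k, y k = Q.eval (w k) + e k)
    (P R : Polynomial ℝ) (hP : P.Monic) (hPdeg : P.natDegree = s)
    (hRdeg : R.degree ≤ ((rc + s - 1 : ℕ) : WithBot ℕ))
    (hkey : ∀ k, P.eval (w k) * y k = R.eval (w k)) :
    R = P * Q := by
  classical
  have hQnat : Q.natDegree < rc := by
    rcases eq_or_ne Q 0 with rfl | h0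
    · simp only [natDegree_zero]; exact hrc
    · exact natDegree_lt_iff_degree_lt h0 |>.2 hQ
  set D := R - P * Q with hD
  -- the set of uncorrupted indices
  set A : Finset (Fin (rc + 2 * s)) := Finset.univ.filter (fun k => e k = 0) with hA
  have hne : (Finset.univ.filter (fun k => ¬ e k = 0)).card ≤ s := by
    have : {k | e k ≠ 0} = ↑(Finset.univ.filter (fun k => ¬ e k = 0)) := by
      ext k; simp
    rw [this, Set.ncard_coe_finset] at he
    exact he
  have hAcard : rc + s ≤ A.card := by
    have htot := Finset.card_filter_add_card_filter_not
      (s := (Finset.univ : Finset (Fin (rc + 2 * s)))) (p := fun k => e k = 0)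
    simp only [Finset.card_univ, Fintype.card_fin] at htot
    rw [hA]
    omega
  have heval : ∀ k ∈ A, D.eval (w k) = 0 := by
    intro k hk
    have hek : e k = 0 := by simpa [hA] using hk
    have := hkey k
    rw [hy k, hek] at this
    simp only [hD, eval_sub, eval_mul]
    rw [← this]; ring
  have hDdeg : D.natDegree < rc + s := by
    have hR : R.natDegree ≤ rc + s - 1 := natDegree_le_iff_degree_le.2 hRdeg
    have hPQ : (P * Q).natDegree ≤ rc + s - 1 := by
      calc (P * Q).natDegree ≤ P.natDegree + Q.natDegree := natDegree_mul_le
        _ ≤ s + (rc - 1) := by omega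
        _ = rc + s - 1 := by omega
    have := natDegree_sub_le R (P * Q)
    rw [hD]
    omega
  have hDzero : D = 0 := by
    apply Polynomial.eq_zero_of_natDegree_lt_card_of_eval_eq_zero' D (A.image w)
    · intro x hx
      obtain ⟨k, hk, rfl⟩ := Finset.mem_image.1 hx
      exact heval k hk
    · rw [Finset.card_image_of_injective _ hw]
      omega
  have := sub_eq_zero.mp hDzero
  linear_combination this
end

section
/- Let s ≥ 0 and r_c ≥ 1 be integers and r = r_c + 2s. Let w_1,…,w_r be distinct real numbers, let Q and Q' be real polynomials of degree < r_c, and let e, e' ∈ ℝ^r both be s-sparse. If Q(w_k) + e_k = Q'(w_k) + e'_k for all k = 1,…,r, then Q = Q' and e = e'; that is, a polynomial of degree less than r_c is uniquely determined by its evaluations at r_c + 2s distinct points even when up to s of the evaluations are arbitrarily corrupted. -/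
open Polynomial

/-- Unique decoding: a polynomial of degree `< r_c` is uniquely determined by its
evaluations at `r = r_c + 2s` distinct points, even when up to `s` of the evaluations are
arbitrarily corrupted. -/
theorem unique_decoding (s rc : ℕ) (hrc : 1 ≤ rc)
    (w : Fin (rc + 2 * s) → ℝ) (hw : Function.Injective w)
    (Q Q' : Polynomial ℝ) (hQ : Q.degree < (rc : WithBot ℕ))
    (hQ' : Q'.degree < (rc : WithBot ℕ))
    (e e' : Fin (rc + 2 * s) → ℝ)
    (he : {k | e k ≠ 0}.ncard ≤ s) (he' : {k | e' k ≠ 0}.ncard ≤ s)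
    (h : ∀ k, Q.eval (w k) + e k = Q'.eval (w k) + e' k) :
    Q = Q' ∧ e = e' := by
  classical
  set D := Q - Q' with hDdef
  have hDdeg : D.degree < (rc : WithBot ℕ) :=
    lt_of_le_of_lt (degree_sub_le _ _) (max_lt hQ hQ')
  let S : Finset (Fin (rc + 2 * s)) := Finset.univ.filter (fun k => e k ≠ 0 ∨ e' k ≠ 0)
  have hScard : S.card ≤ 2 * s := by
    have hsub : S ⊆ {k | e k ≠ 0}.toFinset ∪ {k | e' k ≠ 0}.toFinset := by
      intro k hk
      simp only [S, Finset.mem_filter] at hk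
      rcases hk.2 with h1 | h1
      · exact Finset.mem_union_left _ (by simpa using h1)
      · exact Finset.mem_union_right _ (by simpa using h1)
    calc S.card ≤ _ := Finset.card_le_card hsub
      _ ≤ {k | e k ≠ 0}.toFinset.card + {k | e' k ≠ 0}.toFinset.card :=
          Finset.card_union_le _ _
      _ ≤ s + s := by
          have h1 : {k | e k ≠ 0}.toFinset.card = {k | e k ≠ 0}.ncard := by
            rw [Set.ncard_eq_toFinset_card']
          have h2 : {k | e' k ≠ 0}.toFinset.card = {k | e' k ≠ 0}.ncard := by
            rw [Set.ncard_eq_toFinset_card']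
          omega
      _ = 2 * s := by ring
  have hcardcompl : rc ≤ Sᶜ.card := by
    have := Finset.card_compl S
    simp only [Fintype.card_fin] at this
    omega
  have hzero : ∀ k : (Sᶜ : Finset _), D.eval (w k) = 0 := by
    rintro ⟨k, hk⟩
    simp only [S, Finset.mem_compl, Finset.mem_filter, Finset.mem_univ, true_and,
      not_or, not_not] at hk
    have := h k
    simp [hDdef, eval_sub, hk.1, hk.2] at this ⊢
    linarith
  have hD0 : D = 0 := by
    by_cases hD : D = 0
    · exact hD
    · apply Polynomial.eq_zero_of_natDegree_lt_card_of_eval_eq_zero D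
        (f := fun k : (Sᶜ : Finset _) => w k)
        (fun a b hab => Subtype.ext (hw hab)) hzero
      have hnd : D.natDegree < rc := by
        have := (Polynomial.natDegree_lt_iff_degree_lt hD).mpr (by exact_mod_cast hDdeg)
        exact this
      calc D.natDegree < rc := hnd
        _ ≤ Sᶜ.card := hcardcompl
        _ = Fintype.card (Sᶜ : Finset _) := (Fintype.card_coe _).symm
  have hQQ' : Q = Q' := by
    have := sub_eq_zero.mp hD0
    exact this
  refine ⟨hQQ', ?_⟩
  funext k
  have := h k
  rw [hQQ'] at this
  linarith
end

section
/- Let r ≥ 1 be an integer, w_1,…,w_r ∈ ℝ, ȳ ∈ ℝ^d, and n_1,…,n_r ∈ ℝ^{d_c}, and set R_k = W(w_k)·ȳ + n_k for k = 1,…,r. Then for μ-almost every f ∈ ℝ^{d_c}, the following holds simultaneously for every k ∈ {1,…,r}: f^T R_k ≠ Q_{f,ȳ}(w_k) if and only if n_k ≠ 0. In other words, with probability one the decoder's test detects exactly the corrupted received messages. -/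
open Polynomial

/-- The index `(v-1)·r_c + ℓ + 1` (1-based), i.e. `v·r_c + ℓ` (0-based), as an element
of `Fin (r_c · d_c)`. -/
def kidx {rc dc : ℕ} (v : Fin dc) (ℓ : Fin rc) : Fin (rc * dc) :=
  ⟨(v : ℕ) * rc + (ℓ : ℕ), by
    have h1 : (v : ℕ) + 1 ≤ dc := v.isLt
    have h2 : (ℓ : ℕ) < rc := ℓ.isLt
    nlinarith⟩

/-- The action of the Kronecker–Vandermonde matrix
`W(w) = I_{d_c} ⊗ [1, w, …, w^{r_c - 1}]` on `ȳ ∈ ℝ^d`, `d = r_c · d_c`: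
the `v`-th entry of `W(w)·ȳ` is `Σ_{ℓ=0}^{r_c-1} w^ℓ · ȳ_{(v-1)·r_c + ℓ + 1}`. -/
def Wact {rc dc : ℕ} (w : ℝ) (y : Fin (rc * dc) → ℝ) : Fin dc → ℝ :=
  fun v => ∑ ℓ : Fin rc, w ^ (ℓ : ℕ) * y (kidx v ℓ)

/-- The coefficient `u_{ℓ+1} = Σ_{p=1}^{d_c} f_p · ȳ_{ℓ+1+(p-1)·r_c}`. -/
def Qcoef {rc dc : ℕ} (f : Fin dc → ℝ) (y : Fin (rc * dc) → ℝ) (ℓ : Fin rc) : ℝ :=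
  ∑ p : Fin dc, f p * y (kidx p ℓ)

/-- The polynomial `Q_{f,ȳ}(X) = Σ_{ℓ=0}^{r_c-1} u_{ℓ+1} X^ℓ` of degree `< r_c`. -/
noncomputable def Qpoly {rc dc : ℕ} (f : Fin dc → ℝ) (y : Fin (rc * dc) → ℝ) :
    Polynomial ℝ :=
  ∑ ℓ : Fin rc, Polynomial.C (Qcoef f y ℓ) * Polynomial.X ^ (ℓ : ℕ)


open MeasureTheory ProbabilityTheory in
lemma gauss_singleton' (c : ℝ) : gaussianReal 0 1 {c} = 0 :=
  (gaussianReal_absolutelyContinuous 0 one_ne_zero) (measure_singleton c)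

open MeasureTheory ProbabilityTheory in
lemma hyperplane_ae' {m : ℕ} (n : Fin (m+1) → ℝ) (v0 : Fin (m+1)) (hv0 : n v0 ≠ 0) :
    ∀ᵐ f ∂(Measure.pi fun _ : Fin (m+1) => gaussianReal 0 1),
      ∑ v, f v * n v ≠ 0 := by
  have hmp := measurePreserving_piFinSuccAbove
    (fun _ : Fin (m+1) => (gaussianReal 0 1 : Measure ℝ)) v0
  set T : Set (ℝ × (Fin m → ℝ)) :=
    {p | p.1 * n v0 + ∑ j, p.2 j * n (v0.succAbove j) = 0} with hT
  have hgm : Measurable fun p : ℝ × (Fin m → ℝ) =>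
      p.1 * n v0 + ∑ j, p.2 j * n (v0.succAbove j) := by
    apply Measurable.add
    · exact measurable_fst.mul measurable_const
    · exact Finset.measurable_sum _ fun j _ =>
        ((measurable_pi_apply j).comp measurable_snd).mul measurable_const
  have hTm : MeasurableSet T := hgm (measurableSet_singleton 0)
  rw [Filter.eventually_iff, mem_ae_iff]
  have hSeq : {f : Fin (m+1) → ℝ | ∑ v, f v * n v = 0}
      = (MeasurableEquiv.piFinSuccAbove (fun _ => ℝ) v0) ⁻¹' T := by
    ext f
    simp only [Set.mem_setOf_eq, Set.mem_preimage, hT,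
      MeasurableEquiv.piFinSuccAbove]
    rw [Fin.sum_univ_succAbove (fun v => f v * n v) v0]
    rfl
  simp only [Set.compl_setOf, not_not]
  rw [hSeq, hmp.measure_preimage hTm.nullMeasurableSet]
  rw [← Measure.prod_swap, Measure.map_apply measurable_swap hTm]
  rw [Measure.measure_prod_null (measurable_swap hTm)]
  refine Filter.Eventually.of_forall fun g => ?_
  have : (Prod.mk g ⁻¹' (Prod.swap ⁻¹' T)) = {-(∑ j, g j * n (v0.succAbove j)) / n v0} := by
    ext a
    simp only [Set.mem_preimage, Set.mem_singleton_iff, hT, Set.mem_setOf_eq, Prod.swap]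
    constructor
    · intro h; field_simp; linarith
    · intro h; subst h; field_simp; ring
  show (gaussianReal 0 1) (Prod.mk g ⁻¹' (Prod.swap ⁻¹' T)) = 0
  rw [this]
  exact gauss_singleton' _

lemma sum_Wact_eq {rc dc : ℕ} (w : ℝ) (y : Fin (rc * dc) → ℝ) (f : Fin dc → ℝ) :
    ∑ v : Fin dc, f v * Wact w y v = (Qpoly f y).eval w := by
  simp only [Wact, Qpoly, Qcoef, Polynomial.eval_finset_sum, Polynomial.eval_mul,
    Polynomial.eval_C, Polynomial.eval_pow, Polynomial.eval_X, Finset.mul_sum,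
    Finset.sum_mul]
  rw [Finset.sum_comm]
  apply Finset.sum_congr rfl; intro ℓ _
  apply Finset.sum_congr rfl; intro v _
  ring


/-- Almost-sure detection of corrupted messages: let `R_k = W(w_k)·ȳ + n_k`. Then for
almost every standard Gaussian vector `f`, simultaneously for every `k`,
`fᵀ R_k ≠ Q_{f,ȳ}(w_k)` if and only if `n_k ≠ 0`. -/

theorem detection_ae (rc dc r : ℕ) (hrc : 1 ≤ rc) (hdc : 1 ≤ dc) (hr : 1 ≤ r)
    (w : Fin r → ℝ) (y : Fin (rc * dc) → ℝ) (n : Fin r → Fin dc → ℝ) :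
    ∀ᵐ f ∂(MeasureTheory.Measure.pi
        fun _ : Fin dc => ProbabilityTheory.gaussianReal 0 1),
      ∀ k : Fin r,
        (∑ v : Fin dc, f v * (Wact (w k) y v + n k v)) ≠ (Qpoly f y).eval (w k) ↔
          n k ≠ 0 := by
  rw [MeasureTheory.ae_all_iff]
  intro k
  by_cases hk : n k = 0
  · refine Filter.Eventually.of_forall fun f => ?_
    simp [hk, sum_Wact_eq]
  · rcases dc with _ | m
    · exact absurd (_root_.funext fun v => Fin.elim0 v) hk
    obtain ⟨v0, hv0⟩ := Function.ne_iff.mp hk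
    filter_upwards [hyperplane_ae' (n k) v0 hv0] with f hf
    have expand : ∑ v, f v * (Wact (w k) y v + n k v)
        = (Qpoly f y).eval (w k) + ∑ v, f v * n k v := by
      rw [← sum_Wact_eq (w k) y f, ← Finset.sum_add_distrib]
      apply Finset.sum_congr rfl; intro v _; ring
    rw [expand]
    constructor
    · intro _; exact hk
    · intro _ h
      exact hf (by linarith)
end

section
/- Let s ≥ 0 and r_c ≥ 1 be integers, r = 2s + r_c, and let w_1,…,w_r be distinct real numbers. Suppose ȳ, ȳ' ∈ ℝ^d and vectors n_1,…,n_r, n'_1,…,n'_r ∈ ℝ^{d_c} satisfy |{k : n_k ≠ 0}| ≤ s, |{k : n'_k ≠ 0}| ≤ s, and W(w_k)·ȳ + n_k = W(w_k)·ȳ' + n'_k for all k = 1,…,r. Then ȳ = ȳ' and n_k = n'_k for all k; that is, the Kronecker–Vandermonde code with redundancy ratio r = 2s + r_c corrects any s corrupted messages. -/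
open Polynomial

/-- The Kronecker–Vandermonde code with redundancy ratio `r = 2s + r_c` corrects any `s`
corrupted messages: if at most `s` of the `n_k` and at most `s` of the `n'_k` are nonzero
and `W(w_k)·ȳ + n_k = W(w_k)·ȳ' + n'_k` for all `k`, then `ȳ = ȳ'` and `n_k = n'_k`. -/
theorem error_correction (s rc dc : ℕ) (hrc : 1 ≤ rc) (hdc : 1 ≤ dc)
    (w : Fin (2 * s + rc) → ℝ) (hw : Function.Injective w)
    (y y' : Fin (rc * dc) → ℝ)
    (n n' : Fin (2 * s + rc) → Fin dc → ℝ)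
    (hn : {k | n k ≠ 0}.ncard ≤ s) (hn' : {k | n' k ≠ 0}.ncard ≤ s)
    (h : ∀ k v, Wact (w k) y v + n k v = Wact (w k) y' v + n' k v) :
    y = y' ∧ ∀ k, n k = n' k := by
  classical
  set A : Finset (Fin (2 * s + rc)) := Finset.univ.filter (fun k => n k ≠ 0) with hA
  set B : Finset (Fin (2 * s + rc)) := Finset.univ.filter (fun k => n' k ≠ 0) with hB
  have hAcard : A.card ≤ s := by
    have h1 : {k | n k ≠ 0}.ncard = A.card := by
      rw [Set.ncard_eq_toFinset_card']
      congr 1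
      ext k; simp [hA]
    omega
  have hBcard : B.card ≤ s := by
    have h1 : {k | n' k ≠ 0}.ncard = B.card := by
      rw [Set.ncard_eq_toFinset_card']
      congr 1
      ext k; simp [hB]
    omega
  set G : Finset (Fin (2 * s + rc)) := (A ∪ B)ᶜ with hG
  have hGcard : rc ≤ G.card := by
    have h1 : (A ∪ B).card ≤ 2 * s := by
      have := Finset.card_union_le A B
      omega
    have h2 : G.card = 2 * s + rc - (A ∪ B).card := by
      rw [hG, Finset.card_compl, Fintype.card_fin]
    omega
  have hgood : ∀ k ∈ G, ∀ v, Wact (w k) y v = Wact (w k) y' v := by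
    intro k hk v
    have hk' : n k = 0 ∧ n' k = 0 := by
      simp [hG, hA, hB, Finset.mem_compl, Finset.mem_union] at hk
      tauto
    have hh := h k v
    rw [hk'.1, hk'.2] at hh
    simpa using hh
  have hyy : y = y' := by
    funext i
    have hi : (i : ℕ) < rc * dc := i.isLt
    have hrcpos : 0 < rc := hrc
    set v : Fin dc := ⟨(i : ℕ) / rc, by
      apply Nat.div_lt_of_lt_mul; omega⟩ with hv
    set ℓ : Fin rc := ⟨(i : ℕ) % rc, Nat.mod_lt _ hrcpos⟩ with hℓ
    have hki : kidx v ℓ = i := by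
      apply Fin.ext
      show (i : ℕ) / rc * rc + (i : ℕ) % rc = (i : ℕ)
      rw [Nat.mul_comm]
      exact Nat.div_add_mod _ _
    set p : Polynomial ℝ :=
      ∑ j : Fin rc, C (y (kidx v j) - y' (kidx v j)) * X ^ (j : ℕ) with hp
    have hdeg : p.natDegree < rc := by
      have h1 : p.natDegree ≤ rc - 1 := by
        apply Polynomial.natDegree_sum_le_of_forall_le
        intro j _
        refine le_trans (Polynomial.natDegree_C_mul_le _ _) ?_
        rw [Polynomial.natDegree_X_pow]
        omega
      omega
    have heval : ∀ x ∈ G.image w, p.eval x = 0 := by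
      intro x hx
      obtain ⟨k, hk, rfl⟩ := Finset.mem_image.mp hx
      have hgv := hgood k hk v
      simp only [Wact] at hgv
      simp only [hp, Polynomial.eval_finset_sum, Polynomial.eval_mul,
        Polynomial.eval_C, Polynomial.eval_pow, Polynomial.eval_X]
      have hsplit : ∑ j : Fin rc, (y (kidx v j) - y' (kidx v j)) * w k ^ (j : ℕ)
          = (∑ j : Fin rc, w k ^ (j : ℕ) * y (kidx v j))
            - ∑ j : Fin rc, w k ^ (j : ℕ) * y' (kidx v j) := by
        rw [← Finset.sum_sub_distrib]
        apply Finset.sum_congr rfl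
        intro j _; ring
      rw [hsplit, hgv, sub_self]
    have hcard : p.natDegree < (G.image w).card := by
      rw [Finset.card_image_of_injective _ hw]
      omega
    have hp0 : p = 0 := Polynomial.eq_zero_of_natDegree_lt_card_of_eval_eq_zero' p _ heval hcard
    have hcoeff : p.coeff (ℓ : ℕ) = y (kidx v ℓ) - y' (kidx v ℓ) := by
      rw [hp, Polynomial.finset_sum_coeff]
      rw [Finset.sum_eq_single ℓ]
      · rw [Polynomial.coeff_C_mul, Polynomial.coeff_X_pow, if_pos rfl, mul_one]
      · intro j _ hj
        rw [Polynomial.coeff_C_mul, Polynomial.coeff_X_pow, if_neg, mul_zero]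
        intro hc
        exact hj (Fin.ext hc.symm)
      · simp
    rw [hp0] at hcoeff
    simp only [Polynomial.coeff_zero] at hcoeff
    rw [hki] at hcoeff
    linarith
  refine ⟨hyy, fun k => ?_⟩
  funext v
  have hh := h k v
  rw [hyy] at hh
  linarith
end

section
/- Let Z be an m × d real matrix and let k ≥ 0 be an integer with m ≥ d + 2k, and suppose that for every subset S of the row indices with |S| ≤ 2k, the submatrix of Z consisting of the rows outside S has rank d. If g, g' ∈ ℝ^d and n, n' ∈ ℝ^m are k-sparse vectors with Z g + n = Z g' + n', then g = g' and n = n'; that is, from the observation R = Z g + n with n k-sparse, the vector g is uniquely determined. -/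
/-- A vector is `t`-sparse if it has at most `t` nonzero coordinates. -/
def Sparse {α : Type*} (t : ℕ) (x : α → ℝ) : Prop :=
  {i | x i ≠ 0}.ncard ≤ t

lemma rank_eq_mulVec_injective {ι : Type*} [Fintype ι] {d : ℕ}
    (A : Matrix ι (Fin d) ℝ) (h : A.rank = d) : Function.Injective A.mulVec := by
  have h1 := A.mulVecLin.finrank_range_add_finrank_ker
  rw [Matrix.rank] at h
  rw [h] at h1
  simp [Module.finrank_pi] at h1
  have := LinearMap.ker_eq_bot.mp h1
  exact this

/-- If `Z` is an `m × d` matrix with `m ≥ d + 2k` such that deleting any `≤ 2k` rows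
leaves a matrix of rank `d`, then from the observation `R = Z g + n` with `n` being
`k`-sparse, the vector `g` (and the noise `n`) is uniquely determined. -/
theorem unique_sparse_recovery (m d k : ℕ) (hm : d + 2 * k ≤ m)
    (Z : Matrix (Fin m) (Fin d) ℝ)
    (hZ : ∀ S : Finset (Fin m), S.card ≤ 2 * k →
      (Z.submatrix (fun x : {a : Fin m // a ∉ S} => (x : Fin m)) id).rank = d) :
    ∀ (g g' : Fin d → ℝ) (n n' : Fin m → ℝ), Sparse k n → Sparse k n' →
      Z.mulVec g + n = Z.mulVec g' + n' → g = g' ∧ n = n' := by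
  intro g g' n n' hn hn' heq
  classical
  set S : Finset (Fin m) := {i | n i ≠ 0 ∨ n' i ≠ 0} with hS
  have hcard : S.card ≤ 2 * k := by
    have : (S : Set (Fin m)) ⊆ {i | n i ≠ 0} ∪ {i | n' i ≠ 0} := by
      intro i hi
      simpa [hS] using hi
    calc S.card = (S : Set (Fin m)).ncard := by rw [Set.ncard_coe_finset]
      _ ≤ ({i | n i ≠ 0} ∪ {i | n' i ≠ 0}).ncard := by
          exact Set.ncard_le_ncard this (Set.toFinite _)
      _ ≤ {i | n i ≠ 0}.ncard + {i | n' i ≠ 0}.ncard := Set.ncard_union_le _ _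
      _ ≤ k + k := add_le_add hn hn'
      _ = 2 * k := (two_mul k).symm
  have hrank := hZ S hcard
  have hinj := rank_eq_mulVec_injective _ hrank
  have hgg : g = g' := by
    apply hinj
    ext x
    have hx : (x : Fin m) ∉ S := x.2
    have hnx : n x = 0 := by
      by_contra h; exact hx (by simp [hS, h])
    have hn'x : n' (x : Fin m) = 0 := by
      by_contra h; exact hx (by simp [hS, h])
    have := congrFun heq (x : Fin m)
    simp only [Pi.add_apply, hnx, hn'x, add_zero] at this
    simpa [Matrix.mulVec, Matrix.submatrix, dotProduct] using this
  refine ⟨hgg, ?_⟩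
  subst hgg
  exact add_left_cancel heq
end
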